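/- arXiv:2203.05785 — 4 statements merged into one kernel-verified Lean document; each statement's English description precedes it below -/
import Mathlib

section
/- In the baseline case-based diffusion model (s_{i,j} = s for i≠j, s_{i,i}=1, v_{Hj} > v_L for all j, s_p ∈ (0,1)), once an individual chooses the new product in some period t, he chooses the new product in all periods t' ≥ t. Equivalently, the sets of new-product adopters satisfy D_n^{t-1} ⊆ D_n^t for all t ≥ 1. -/
/-- Lemma 1: in the baseline case-based diffusion model, once an individual
chooses the new product he chooses it in all future periods:
`D_n^t ⊆ D_n^{t+1}` for all `t`. -/
theorem no_switch_back {ι : Type*} [Fintype ι] [DecidableEq ι]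
    (H vH : ι → ℝ) (vL s sp : ℝ)
    (hs : s ∈ Set.Ioc (0:ℝ) 1) (hsp : sp ∈ Set.Ioo (0:ℝ) 1)
    (hvH : ∀ j, vL < vH j) (hvHH : ∀ j k, H k ≤ vH j)
    (w : ι → ι → ℝ) (hw : ∀ i j, w i j = if i = j then 1 else s)
    (Dn : ℕ → Finset ι) (h0 : Dn 0 = ∅)
    (hdyn : ∀ t, 1 ≤ t → ∀ i, i ∈ Dn t ↔
      ∑ t' ∈ Finset.range t, ∑ j ∈ Dn t', w i j * (vH j - H i) >
        (1 - sp) * ∑ t' ∈ Finset.range t, ∑ j ∈ (Dn t')ᶜ, w i j * (vL - H i)) :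
    ∀ t, Dn t ⊆ Dn (t + 1) := by
  intro t
  induction t using Nat.strong_induction_on with
  | _ t IH =>
    -- monotonicity of `Dn` up to time `t`
    have mono : ∀ a b : ℕ, a ≤ b → b ≤ t → Dn a ⊆ Dn b := by
      intro a b hab hbt
      induction b with
      | zero =>
        interval_cases a
        exact subset_rfl
      | succ b ihb =>
        rcases Nat.lt_or_ge a (b + 1) with h | h
        · exact (ihb (Nat.lt_succ_iff.mp h) (le_trans (Nat.le_succ b) hbt)).trans
            (IH b (lt_of_lt_of_le (Nat.lt_succ_self b) hbt))
        · have : a = b + 1 := le_antisymm hab h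
          subst this
          exact subset_rfl
    intro i hi
    rcases Nat.eq_zero_or_pos t with rfl | ht
    · rw [h0] at hi
      exact absurd hi (Finset.notMem_empty i)
    · have hmem := (hdyn t ht i).mp hi
      rw [hdyn (t + 1) (by omega) i]
      rw [Finset.sum_range_succ, Finset.sum_range_succ, mul_add]
      have hw_nonneg : ∀ j, 0 ≤ w i j := by
        intro j
        rw [hw]
        split
        · norm_num
        · exact le_of_lt hs.1
      have hsp' : (0:ℝ) < 1 - sp := by linarith [hsp.2]
      -- key step: the period-`t` increment is favorable
      have hstep : (1 - sp) * (∑ j ∈ (Dn t)ᶜ, w i j * (vL - H i)) ≤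
          ∑ j ∈ Dn t, w i j * (vH j - H i) := by
        rcases le_or_gt (vL - H i) 0 with hc | hc
        · have hB : (∑ j ∈ (Dn t)ᶜ, w i j * (vL - H i)) ≤ 0 :=
            Finset.sum_nonpos fun j _ => mul_nonpos_of_nonneg_of_nonpos (hw_nonneg j) hc
          have hA : (0:ℝ) ≤ ∑ j ∈ Dn t, w i j * (vH j - H i) :=
            Finset.sum_nonneg fun j _ =>
              mul_nonneg (hw_nonneg j) (by linarith [hvHH j i])
          nlinarith
        · -- vL - H i > 0
          have hAle : ∀ t' ∈ Finset.range t,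
              (∑ j ∈ Dn t', w i j * (vH j - H i)) ≤ ∑ j ∈ Dn t, w i j * (vH j - H i) := by
            intro t' ht'
            refine Finset.sum_le_sum_of_subset_of_nonneg
              (mono t' t (le_of_lt (Finset.mem_range.mp ht')) le_rfl) ?_
            intro j _ _
            exact mul_nonneg (hw_nonneg j) (by linarith [hvHH j i])
          have hBge : ∀ t' ∈ Finset.range t,
              (∑ j ∈ (Dn t)ᶜ, w i j * (vL - H i)) ≤ ∑ j ∈ (Dn t')ᶜ, w i j * (vL - H i) := by
            intro t' ht'
            refine Finset.sum_le_sum_of_subset_of_nonneg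
              (Finset.compl_subset_compl.mpr
                (mono t' t (le_of_lt (Finset.mem_range.mp ht')) le_rfl)) ?_
            intro j _ _
            exact mul_nonneg (hw_nonneg j) (le_of_lt hc)
          have h1 : (∑ t' ∈ Finset.range t, ∑ j ∈ Dn t', w i j * (vH j - H i)) ≤
              (t : ℝ) * ∑ j ∈ Dn t, w i j * (vH j - H i) := by
            calc (∑ t' ∈ Finset.range t, ∑ j ∈ Dn t', w i j * (vH j - H i))
                ≤ ∑ _t' ∈ Finset.range t, ∑ j ∈ Dn t, w i j * (vH j - H i) :=
                  Finset.sum_le_sum hAle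
              _ = (t : ℝ) * ∑ j ∈ Dn t, w i j * (vH j - H i) := by
                  simp [Finset.sum_const, nsmul_eq_mul]
          have h2 : (t : ℝ) * ∑ j ∈ (Dn t)ᶜ, w i j * (vL - H i) ≤
              ∑ t' ∈ Finset.range t, ∑ j ∈ (Dn t')ᶜ, w i j * (vL - H i) := by
            calc (t : ℝ) * ∑ j ∈ (Dn t)ᶜ, w i j * (vL - H i)
                = ∑ _t' ∈ Finset.range t, ∑ j ∈ (Dn t)ᶜ, w i j * (vL - H i) := by
                  simp [Finset.sum_const, nsmul_eq_mul]
              _ ≤ ∑ t' ∈ Finset.range t, ∑ j ∈ (Dn t')ᶜ, w i j * (vL - H i) :=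
                  Finset.sum_le_sum hBge
          have hT : (0:ℝ) < (t : ℝ) := by exact_mod_cast ht
          have key : (t : ℝ) * ((1 - sp) * ∑ j ∈ (Dn t)ᶜ, w i j * (vL - H i)) <
              (t : ℝ) * ∑ j ∈ Dn t, w i j * (vH j - H i) := by
            calc (t : ℝ) * ((1 - sp) * ∑ j ∈ (Dn t)ᶜ, w i j * (vL - H i))
                = (1 - sp) * ((t : ℝ) * ∑ j ∈ (Dn t)ᶜ, w i j * (vL - H i)) := by ring
              _ ≤ (1 - sp) * ∑ t' ∈ Finset.range t, ∑ j ∈ (Dn t')ᶜ, w i j * (vL - H i) :=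
                  mul_le_mul_of_nonneg_left h2 (le_of_lt hsp')
              _ < ∑ t' ∈ Finset.range t, ∑ j ∈ Dn t', w i j * (vH j - H i) := hmem
              _ ≤ (t : ℝ) * ∑ j ∈ Dn t, w i j * (vH j - H i) := h1
          exact le_of_lt (lt_of_mul_lt_mul_left key (le_of_lt hT))
      linarith
end

section
/- In the baseline model, for each period t there exists a unique threshold H̲_t ∈ ℝ ∪ {-∞} such that an individual consumes the new product in period t if and only if his aspiration level H_i > H̲_t. Moreover, H̲_1 = v_L and H̲_t is weakly decreasing in t. -/
/-!
Write `g_i(D)` (`netGain`) for the payoff difference that one period with adopter set `D`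
contributes to individual `i`'s comparison of the new product with the incumbent, so that `i`
adopts in period `t ≥ 1` iff `∑_{r<t} g_i(D_r) > 0`.

If `H_i > v_L`, every period contributes `g_i(D) ≥ 0`, and period `0` (nobody has adopted yet)
contributes strictly; if `H_i ≤ v_L`, period `0` contributes `≤ 0`. Hence `D_1 = {H > v_L}`, and
the high types adopt forever.

If `H_i ≤ v_L`, then `g_i(D)` increases with `D`. So as long as the adopter sets have grown, the
latest period is the best one: a positive cumulative gain stays positive one period later, and by
induction the adopter sets increase.

For an individual who has not adopted before `t`, the cumulative gain is
`s P + κ (v_L - H_i)` with `P = ∑_{r<t} ∑_{j ∈ D_r} (v_{Hj} - v_L)`, an affine function of `H_i`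
that is positive at `H_i = v_L` as soon as anybody has adopted. If it is also positive at
`H_{i'} ≤ H_i`, it is positive at `H_i`. So every adopter set is an upper set for `H`; from
period 2 on the threshold is the largest aspiration level among non-adopters.
-/

open Finset

namespace CaseBasedDiffusion

theorem sum_range_succ_pos_of_le_last {M : Type*} [AddCommMonoid M] [LinearOrder M]
    [IsOrderedCancelAddMonoid M] {u : ℕ → M} {t : ℕ} (hu : ∀ r < t, u r ≤ u t)
    (h : 0 < ∑ r ∈ range t, u r) : 0 < ∑ r ∈ range (t + 1), u r := by
  rw [← sum_const_zero (s := range t)] at h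
  obtain ⟨r, hr, hpos⟩ := exists_lt_of_sum_lt h
  rw [sum_range_succ, sum_const_zero] at *
  exact add_pos h (hpos.trans_le (hu r (mem_range.1 hr)))

theorem add_mul_pos_of_mem_Icc {R : Type*} [Ring R] [LinearOrder R] [IsStrictOrderedRing R]
    {p κ d d' : R} (hp : 0 < p) (hd : d ∈ Set.Icc 0 d') (h : 0 < p + κ * d') :
    0 < p + κ * d := by
  obtain ⟨hd0, hdd'⟩ := hd
  rcases le_total 0 κ with hκ | hκ
  · exact add_pos_of_pos_of_nonneg hp (mul_nonneg hκ hd0)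
  · exact h.trans_le (add_le_add_right (mul_le_mul_of_nonpos_left hdd' hκ) p)

theorem mem_iff_sup_compl_lt {ι α : Type*} [Fintype ι] [DecidableEq ι] [LinearOrder α]
    {f : ι → α} {D : Finset ι} (hD : ∀ i i', f i' ≤ f i → i' ∈ D → i ∈ D) {i : ι} :
    i ∈ D ↔ Dᶜ.sup (fun k => (f k : WithBot α)) < f i := by
  rw [Finset.sup_lt_iff (WithBot.bot_lt_coe _)]
  constructor
  · exact fun hi k hk => WithBot.coe_lt_coe.2 (not_le.1 fun hle => mem_compl.1 hk (hD k i hle hi))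
  · exact fun h => by_contra fun hi => lt_irrefl _ (h i (mem_compl.2 hi))

theorem weight_nonneg {ι : Type*} [DecidableEq ι] {w : ι → ι → ℝ} {s : ℝ}
    (hw : ∀ i j, w i j = if i = j then 1 else s) (hs : 0 ≤ s) (i j : ι) : 0 ≤ w i j := by
  rw [hw]; split_ifs <;> linarith

def netGain {ι : Type*} [Fintype ι] [DecidableEq ι] (w : ι → ι → ℝ) (H vH : ι → ℝ)
    (vL sp : ℝ) (i : ι) (D : Finset ι) : ℝ :=
  ∑ j ∈ D, w i j * (vH j - H i) - (1 - sp) * ∑ j ∈ Dᶜ, w i j * (vL - H i)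

section netGain

variable {ι : Type*} [Fintype ι] [DecidableEq ι] {w : ι → ι → ℝ} {H vH : ι → ℝ} {vL sp s : ℝ}
  {i : ι} {D D' : Finset ι}

theorem netGain_mono (hw : ∀ j, 0 ≤ w i j) (hsp : sp ≤ 1) (hiL : H i ≤ vL)
    (hivH : ∀ j, H i ≤ vH j) (hD : D ⊆ D') :
    netGain w H vH vL sp i D ≤ netGain w H vH vL sp i D' := by
  have hgain : ∑ j ∈ D, w i j * (vH j - H i) ≤ ∑ j ∈ D', w i j * (vH j - H i) :=
    sum_le_sum_of_subset_of_nonneg hD fun j _ _ => mul_nonneg (hw j) (sub_nonneg.2 (hivH j))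
  have hloss : ∑ j ∈ D'ᶜ, w i j * (vL - H i) ≤ ∑ j ∈ Dᶜ, w i j * (vL - H i) :=
    sum_le_sum_of_subset_of_nonneg (compl_subset_compl.2 hD) fun j _ _ =>
      mul_nonneg (hw j) (sub_nonneg.2 hiL)
  have := mul_le_mul_of_nonneg_left hloss (sub_nonneg.2 hsp)
  unfold netGain
  linarith

theorem netGain_nonneg (hw : ∀ j, 0 ≤ w i j) (hsp : sp ≤ 1) (hLi : vL ≤ H i)
    (hivH : ∀ j, H i ≤ vH j) : 0 ≤ netGain w H vH vL sp i D := by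
  have hgain : 0 ≤ ∑ j ∈ D, w i j * (vH j - H i) :=
    sum_nonneg fun j _ => mul_nonneg (hw j) (sub_nonneg.2 (hivH j))
  have hloss : ∑ j ∈ Dᶜ, w i j * (vL - H i) ≤ 0 :=
    sum_nonpos fun j _ => mul_nonpos_of_nonneg_of_nonpos (hw j) (sub_nonpos.2 hLi)
  have := mul_nonpos_of_nonneg_of_nonpos (sub_nonneg.2 hsp) hloss
  unfold netGain
  linarith

theorem netGain_empty : netGain w H vH vL sp i ∅ = (1 - sp) * (∑ j, w i j) * (H i - vL) := by
  simp only [netGain, sum_empty, compl_empty, ← sum_mul]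
  ring

theorem netGain_empty_pos_iff (hw : ∀ j, 0 ≤ w i j) (hwii : 0 < w i i) (hsp : sp < 1) :
    0 < netGain w H vH vL sp i ∅ ↔ vL < H i := by
  have hW : 0 < ∑ j, w i j := hwii.trans_le (single_le_sum (fun j _ => hw j) (mem_univ i))
  rw [netGain_empty, mul_pos_iff_of_pos_left (mul_pos (sub_pos.2 hsp) hW), sub_pos]

theorem netGain_of_notMem (hw : ∀ j, w i j = if i = j then 1 else s) (hi : i ∉ D) :
    netGain w H vH vL sp i D = s * ∑ j ∈ D, (vH j - vL) +
      (s * #D - (1 - sp) * (s * #Dᶜ + 1 - s)) * (vL - H i) := by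
  have hgain : ∑ j ∈ D, w i j * (vH j - H i) = s * ∑ j ∈ D, (vH j - H i) := by
    rw [mul_sum]
    exact sum_congr rfl fun j hj => by rw [hw, if_neg (ne_of_mem_of_not_mem hj hi).symm]
  have hweight : ∑ j ∈ Dᶜ, w i j = s * #Dᶜ + 1 - s := by
    have hpt : ∀ j, w i j = s + if i = j then 1 - s else 0 := fun j => by
      rw [hw]; split_ifs <;> ring
    simp only [hpt, sum_add_distrib, sum_const, nsmul_eq_mul, sum_ite_eq, mem_compl, hi,
      if_true, not_false_eq_true]
    ring
  simp only [netGain, hgain, ← sum_mul, hweight, sum_sub_distrib, sum_const, nsmul_eq_mul]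
  ring

theorem sum_netGain_pos_of_le {D : ℕ → Finset ι} {t : ℕ} {i' : ι}
    (hw : ∀ i j, w i j = if i = j then 1 else s) (hs : 0 < s) (hsp : sp < 1)
    (hvH : ∀ j, vL < vH j) (hi : ∀ r < t, i ∉ D r) (hi' : ∀ r < t, i' ∉ D r)
    (hle : H i' ≤ H i) (hiL : H i ≤ vL)
    (h' : 0 < ∑ r ∈ range t, netGain w H vH vL sp i' (D r)) :
    0 < ∑ r ∈ range t, netGain w H vH vL sp i (D r) := by
  set P := ∑ r ∈ range t, ∑ j ∈ D r, (vH j - vL)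
  set κ := ∑ r ∈ range t, (s * #(D r) - (1 - sp) * (s * #(D r)ᶜ + 1 - s))
  have hsum : ∀ x, (∀ r < t, x ∉ D r) →
      ∑ r ∈ range t, netGain w H vH vL sp x (D r) = s * P + κ * (vL - H x) := fun x hx => by
    rw [sum_congr rfl fun r hr => netGain_of_notMem (hw x) (hx r (mem_range.1 hr)),
      sum_add_distrib, ← mul_sum, ← sum_mul]
  have hP : 0 < P := by
    obtain ⟨r, hr, hne⟩ : ∃ r ∈ range t, (D r).Nonempty := by
      -- otherwise `i'`, with `H i' ≤ vL`, would have had nothing to gain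
      by_contra! hempty
      refine h'.not_ge (sum_nonpos fun r hr => ?_)
      rw [hempty r hr]
      exact not_lt.1 fun hpos => ((netGain_empty_pos_iff (weight_nonneg hw hs.le i')
        (by simp [hw]) hsp).1 hpos).not_ge (hle.trans hiL)
    exact sum_pos' (fun r _ => sum_nonneg fun j _ => (sub_pos.2 (hvH j)).le)
      ⟨r, hr, sum_pos (fun j _ => sub_pos.2 (hvH j)) hne⟩
  rw [hsum i hi]
  rw [hsum i' hi'] at h'
  exact add_mul_pos_of_mem_Icc (mul_pos hs hP) ⟨sub_nonneg.2 hiL, by linarith⟩ h'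

end netGain

section adopters

variable {ι : Type*} [Fintype ι] [DecidableEq ι] {w : ι → ι → ℝ} {H vH : ι → ℝ} {vL sp s : ℝ}
  {Dn : ℕ → Finset ι}

theorem mem_adopters_of_lt (h0 : Dn 0 = ∅)
    (hadopt : ∀ t, 1 ≤ t → ∀ i, i ∈ Dn t ↔ 0 < ∑ r ∈ range t, netGain w H vH vL sp i (Dn r))
    {i : ι} (hw : ∀ j, 0 ≤ w i j) (hwii : 0 < w i i) (hsp : sp < 1) (hivH : ∀ j, H i ≤ vH j)
    {t : ℕ} (ht : 1 ≤ t) (hi : vL < H i) : i ∈ Dn t := by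
  obtain ⟨n, rfl⟩ := Nat.exists_eq_add_of_le' ht
  rw [hadopt _ ht, sum_range_succ', h0]
  exact add_pos_of_nonneg_of_pos (sum_nonneg fun r _ => netGain_nonneg hw hsp.le hi.le hivH)
    ((netGain_empty_pos_iff hw hwii hsp).2 hi)

theorem mem_adopters_one_iff (h0 : Dn 0 = ∅)
    (hadopt : ∀ t, 1 ≤ t → ∀ i, i ∈ Dn t ↔ 0 < ∑ r ∈ range t, netGain w H vH vL sp i (Dn r))
    {i : ι} (hw : ∀ j, 0 ≤ w i j) (hwii : 0 < w i i) (hsp : sp < 1) :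
    i ∈ Dn 1 ↔ vL < H i := by
  rw [hadopt 1 le_rfl, sum_range_one, h0, netGain_empty_pos_iff hw hwii hsp]

theorem adopters_subset_succ (h0 : Dn 0 = ∅)
    (hadopt : ∀ t, 1 ≤ t → ∀ i, i ∈ Dn t ↔ 0 < ∑ r ∈ range t, netGain w H vH vL sp i (Dn r))
    (hw : ∀ i j, 0 ≤ w i j) (hwii : ∀ i, 0 < w i i) (hsp : sp < 1)
    (hvHH : ∀ j k, H k ≤ vH j) {t : ℕ} (hle : ∀ r < t, Dn r ⊆ Dn t) : Dn t ⊆ Dn (t + 1) := by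
  intro i hi
  rcases Nat.eq_zero_or_pos t with rfl | ht
  · simp [h0] at hi
  by_cases hiL : vL < H i
  · exact mem_adopters_of_lt h0 hadopt (hw i) (hwii i) hsp (fun j => hvHH j i) (by omega) hiL
  rw [hadopt t ht] at hi
  rw [hadopt (t + 1) (by omega)]
  exact sum_range_succ_pos_of_le_last (fun r hr =>
    netGain_mono (hw i) hsp.le (not_lt.1 hiL) (fun j => hvHH j i) (hle r hr)) hi

theorem adopters_monotone (h0 : Dn 0 = ∅)
    (hadopt : ∀ t, 1 ≤ t → ∀ i, i ∈ Dn t ↔ 0 < ∑ r ∈ range t, netGain w H vH vL sp i (Dn r))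
    (hw : ∀ i j, 0 ≤ w i j) (hwii : ∀ i, 0 < w i i) (hsp : sp < 1)
    (hvHH : ∀ j k, H k ≤ vH j) : Monotone Dn := by
  have hle : ∀ t, ∀ r ≤ t, Dn r ⊆ Dn t := by
    intro t
    induction t with
    | zero => intro r hr; rw [Nat.le_zero.1 hr]
    | succ t ih =>
      intro r hr
      rcases Nat.of_le_succ hr with hr | rfl
      · exact (ih r hr).trans
          (adopters_subset_succ h0 hadopt hw hwii hsp hvHH fun r hr => ih r hr.le)
      · exact subset_rfl
  exact fun r t hrt => hle t r hrt

theorem mem_adopters_of_le_of_mem (h0 : Dn 0 = ∅)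
    (hadopt : ∀ t, 1 ≤ t → ∀ i, i ∈ Dn t ↔ 0 < ∑ r ∈ range t, netGain w H vH vL sp i (Dn r))
    (hw : ∀ i j, w i j = if i = j then 1 else s) (hs : 0 < s) (hsp : sp < 1)
    (hvH : ∀ j, vL < vH j) (hvHH : ∀ j k, H k ≤ vH j) (t : ℕ) {i i' : ι}
    (hle : H i' ≤ H i) (hi' : i' ∈ Dn t) : i ∈ Dn t := by
  have hw0 := weight_nonneg hw hs.le
  have hwii : ∀ i, 0 < w i i := fun i => by simp [hw]
  have hmono := adopters_monotone h0 hadopt hw0 hwii hsp hvHH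
  induction t with
  | zero => simp [h0] at hi'
  | succ t ih =>
    by_cases hit : i ∈ Dn t
    · exact hmono t.le_succ hit
    by_cases hi't : i' ∈ Dn t
    · exact hmono t.le_succ (ih hi't)
    by_cases hiL : vL < H i
    · exact mem_adopters_of_lt h0 hadopt (hw0 i) (hwii i) hsp (fun j => hvHH j i) (by omega) hiL
    have hbefore : ∀ x ∉ Dn t, ∀ r < t + 1, x ∉ Dn r :=
      fun x hx r hr hxr => hx (hmono (by omega) hxr)
    rw [hadopt _ (by omega)] at hi' ⊢
    exact sum_netGain_pos_of_le hw hs hsp hvH (hbefore i hit) (hbefore i' hi't) hle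
      (not_lt.1 hiL) hi'

end adopters

end CaseBasedDiffusion

open CaseBasedDiffusion in
theorem threshold_characterization_general {ι : Type*} [Fintype ι] [DecidableEq ι]
    (H vH : ι → ℝ) (vL s sp : ℝ)
    (hs : s ∈ Set.Ioc (0:ℝ) 1) (hsp : sp ∈ Set.Ioo (0:ℝ) 1)
    (hvH : ∀ j, vL < vH j) (hvHH : ∀ j k, H k ≤ vH j)
    (w : ι → ι → ℝ) (hw : ∀ i j, w i j = if i = j then 1 else s)
    (Dn : ℕ → Finset ι) (h0 : Dn 0 = ∅)
    (hdyn : ∀ t, 1 ≤ t → ∀ i, i ∈ Dn t ↔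
      ∑ t' ∈ Finset.range t, ∑ j ∈ Dn t', w i j * (vH j - H i) >
        (1 - sp) * ∑ t' ∈ Finset.range t, ∑ j ∈ (Dn t')ᶜ, w i j * (vL - H i)) :
    ∃ Hbar : ℕ → WithBot ℝ,
      Hbar 1 = (vL : WithBot ℝ) ∧
      (∀ t, 1 ≤ t → ∀ i, i ∈ Dn t ↔ Hbar t < (H i : WithBot ℝ)) ∧
      (∀ t, 1 ≤ t → Hbar (t + 1) ≤ Hbar t) := by
  have hw0 := weight_nonneg hw hs.1.le
  have hwii : ∀ i, 0 < w i i := fun i => by simp [hw]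
  have hadopt : ∀ t, 1 ≤ t → ∀ i,
      i ∈ Dn t ↔ 0 < ∑ r ∈ range t, netGain w H vH vL sp i (Dn r) := fun t ht i => by
    simp only [hdyn t ht i, netGain, sum_sub_distrib, ← mul_sum, gt_iff_lt, sub_pos]
  set Hbar : ℕ → WithBot ℝ := fun t =>
    if t = 1 then vL else ((Dn t)ᶜ).sup fun k => (H k : WithBot ℝ)
  have hthreshold : ∀ t, 1 ≤ t → ∀ i, i ∈ Dn t ↔ Hbar t < (H i : WithBot ℝ) := by
    intro t ht i
    by_cases h1 : t = 1
    · simp only [Hbar, h1, if_true, WithBot.coe_lt_coe]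
      exact mem_adopters_one_iff h0 hadopt (hw0 i) (hwii i) hsp.2
    · simp only [Hbar, h1, if_false]
      exact mem_iff_sup_compl_lt fun i i' =>
        mem_adopters_of_le_of_mem h0 hadopt hw hs.1 hsp.2 hvH hvHH t
  refine ⟨Hbar, if_pos rfl, hthreshold, fun t ht => ?_⟩
  simp only [Hbar, show t + 1 ≠ 1 by omega, if_false]
  exact Finset.sup_le fun k hk => not_lt.1 fun hlt =>
    mem_compl.1 hk (adopters_monotone h0 hadopt hw0 hwii hsp.2 hvHH t.le_succ
      ((hthreshold t ht k).2 hlt))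

/-- Proposition 1: in each period there is a threshold `H̲_t ∈ ℝ ∪ {-∞}` such
that exactly the individuals with aspiration level above the threshold consume
the new product; `H̲_1 = v_L` and the thresholds are weakly decreasing. -/
theorem threshold_characterization {ι : Type*} [Fintype ι] [DecidableEq ι]
    (H vH : ι → ℝ) (vL s sp : ℝ)
    (hs : s ∈ Set.Ioc (0:ℝ) 1) (hsp : sp ∈ Set.Ioo (0:ℝ) 1)
    (hvH : ∀ j, vL < vH j) (hvHH : ∀ j k, H k ≤ vH j)
    (htop : ∃ i, vL ≤ H i)
    (w : ι → ι → ℝ) (hw : ∀ i j, w i j = if i = j then 1 else s)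
    (Dn : ℕ → Finset ι) (h0 : Dn 0 = ∅)
    (hdyn : ∀ t, 1 ≤ t → ∀ i, i ∈ Dn t ↔
      ∑ t' ∈ Finset.range t, ∑ j ∈ Dn t', w i j * (vH j - H i) >
        (1 - sp) * ∑ t' ∈ Finset.range t, ∑ j ∈ (Dn t')ᶜ, w i j * (vL - H i)) :
    ∃ Hbar : ℕ → WithBot ℝ,
      Hbar 1 = (vL : WithBot ℝ) ∧
      (∀ t, 1 ≤ t → ∀ i, i ∈ Dn t ↔ Hbar t < (H i : WithBot ℝ)) ∧
      (∀ t, 1 ≤ t → Hbar (t + 1) ≤ Hbar t) :=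
  threshold_characterization_general H vH vL s sp hs hsp hvH hvHH w hw Dn h0 hdyn
end

section
/- Consider two product specifications ((v_{Hi}), s_p) and ((v'_{Hi}), s'_p) with v'_{Hi} ≥ v_{Hi} for all i and s'_p ≥ s_p, in the baseline case-based diffusion model. Then the induced adoption thresholds satisfy H̲_t ≥ H̲'_t for all t ≥ 2; equivalently, the adopter sets satisfy D_n^t ⊆ D_n'^t for every period t. -/
/-- Lemma 2 (domination): if one product specification has weakly larger payoffs
and weakly larger similarity, it covers a weakly larger market in every period:
`D_n^t ⊆ D_n'^t` for all `t`. -/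
theorem dominating_specification {ι : Type*} [Fintype ι] [DecidableEq ι]
    (H vH vH' : ι → ℝ) (vL s sp sp' : ℝ)
    (hs : s ∈ Set.Ioc (0:ℝ) 1)
    (hsp : sp ∈ Set.Ioo (0:ℝ) 1) (hsp' : sp' ∈ Set.Ioo (0:ℝ) 1)
    (hvH : ∀ j, vL < vH j) (hvHH : ∀ j k, H k ≤ vH j)
    (hle : ∀ j, vH j ≤ vH' j) (hsple : sp ≤ sp')
    (w : ι → ι → ℝ) (hw : ∀ i j, w i j = if i = j then 1 else s)
    (Dn Dn' : ℕ → Finset ι) (h0 : Dn 0 = ∅) (h0' : Dn' 0 = ∅)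
    (hdyn : ∀ t, 1 ≤ t → ∀ i, i ∈ Dn t ↔
      ∑ t' ∈ Finset.range t, ∑ j ∈ Dn t', w i j * (vH j - H i) >
        (1 - sp) * ∑ t' ∈ Finset.range t, ∑ j ∈ (Dn t')ᶜ, w i j * (vL - H i))
    (hdyn' : ∀ t, 1 ≤ t → ∀ i, i ∈ Dn' t ↔
      ∑ t' ∈ Finset.range t, ∑ j ∈ Dn' t', w i j * (vH' j - H i) >
        (1 - sp') * ∑ t' ∈ Finset.range t, ∑ j ∈ (Dn' t')ᶜ, w i j * (vL - H i)) :
    ∀ t, Dn t ⊆ Dn' t := by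

  intro t
  induction t using Nat.strong_induction_on with
  | _ t ih =>
    match t with
    | 0 => rw [h0]; exact Finset.empty_subset _
    | (t+1) =>
      intro i hi
      have ht : 1 ≤ t + 1 := Nat.le_add_left 1 t
      rw [hdyn (t+1) ht i] at hi
      rw [hdyn' (t+1) ht i]
      have hwpos : ∀ j, 0 < w i j := by
        intro j; rw [hw]; split
        · norm_num
        · exact hs.1
      have hwnn : ∀ j, 0 ≤ w i j := fun j => (hwpos j).le
      have hsub : ∀ t' ∈ Finset.range (t+1), Dn t' ⊆ Dn' t' :=
        fun t' ht' => ih t' (Finset.mem_range.mp ht')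
      have hL : ∑ t' ∈ Finset.range (t+1), ∑ j ∈ Dn t', w i j * (vH j - H i)
          ≤ ∑ t' ∈ Finset.range (t+1), ∑ j ∈ Dn' t', w i j * (vH' j - H i) := by
        apply Finset.sum_le_sum
        intro t' ht'
        calc ∑ j ∈ Dn t', w i j * (vH j - H i)
            ≤ ∑ j ∈ Dn t', w i j * (vH' j - H i) := by
              apply Finset.sum_le_sum; intro j _
              exact mul_le_mul_of_nonneg_left (by linarith [hle j]) (hwnn j)
          _ ≤ ∑ j ∈ Dn' t', w i j * (vH' j - H i) := by
              apply Finset.sum_le_sum_of_subset_of_nonneg (hsub t' ht')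
              intro j _ _
              exact mul_nonneg (hwnn j) (by linarith [hvHH j i, hle j])
      have hLnn : 0 ≤ ∑ t' ∈ Finset.range (t+1), ∑ j ∈ Dn' t', w i j * (vH' j - H i) := by
        apply Finset.sum_nonneg; intro t' _
        apply Finset.sum_nonneg; intro j _
        exact mul_nonneg (hwnn j) (by linarith [hvHH j i, hle j])
      by_cases hcase : H i ≤ vL
      · have hS : ∑ t' ∈ Finset.range (t+1), ∑ j ∈ (Dn' t')ᶜ, w i j * (vL - H i)
            ≤ ∑ t' ∈ Finset.range (t+1), ∑ j ∈ (Dn t')ᶜ, w i j * (vL - H i) := by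
          apply Finset.sum_le_sum
          intro t' ht'
          apply Finset.sum_le_sum_of_subset_of_nonneg
            (Finset.compl_subset_compl.mpr (hsub t' ht'))
          intro j _ _
          exact mul_nonneg (hwnn j) (by linarith)
        have hS0 : 0 ≤ ∑ t' ∈ Finset.range (t+1), ∑ j ∈ (Dn' t')ᶜ, w i j * (vL - H i) := by
          apply Finset.sum_nonneg; intro t' _
          apply Finset.sum_nonneg; intro j _
          exact mul_nonneg (hwnn j) (by linarith)
        have h1 : 0 < 1 - sp := by linarith [hsp.2]
        nlinarith [hi, hL, hS, hS0]
      · push_neg at hcase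
        have hterm0 : ∑ j ∈ (Dn' 0)ᶜ, w i j * (vL - H i) < 0 := by
          rw [h0', Finset.compl_empty]
          apply Finset.sum_neg
          · intro j _
            exact mul_neg_of_pos_of_neg (hwpos j) (by linarith)
          · exact ⟨i, Finset.mem_univ i⟩
        have hS' : ∑ t' ∈ Finset.range (t+1), ∑ j ∈ (Dn' t')ᶜ, w i j * (vL - H i) < 0 := by
          rw [Finset.sum_range_succ']
          have : ∑ t' ∈ Finset.range t, ∑ j ∈ (Dn' (t'+1))ᶜ, w i j * (vL - H i) ≤ 0 := by
            apply Finset.sum_nonpos; intro t' _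
            apply Finset.sum_nonpos; intro j _
            exact mul_nonpos_of_nonneg_of_nonpos (hwnn j) (by linarith)
          linarith
        have h1 : 0 < 1 - sp' := by linarith [hsp'.2]
        nlinarith
end

section
/- Fix the adopter sets (D_c^{t'}, D_n^{t'}) for t' ≤ T and group-based similarities (s_{N_k}) with s_{N_k} ∈ (0,1] for all k, and let v_{Hj} > v_L > H_i and s_p ∈ (0,1). Let s'_{N_k} = z·s_{N_k} for some z ∈ [1, 1/max_k s_{N_k}]. If an individual i satisfies the adoption inequality Σ_{t'≤T} Σ_{j∈D_n^{t'}} s_j (v_{Hj} - H_i) > Σ_{t'≤T} (1-s_p)[Σ_{j∈D_c^{t'}, j≠i} s_j + 1](v_L - H_i) under similarities (s_{N_k}), then i also satisfies the corresponding inequality under (s'_{N_k}), i.e., Σ_{t'≤T} Σ_{j∈D_n^{t'}} s'_j (v_{Hj} - H_i) > Σ_{t'≤T} (1-s_p)[Σ_{j∈D_c^{t'}, j≠i} s'_j + 1](v_L - H_i). -/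
/-- Proposition 6, part 1 (key step): uniformly strengthening all group-based
network ties by a factor `z ∈ [1, 1/max_k s_{N_k}]` preserves the adoption
inequality of a superior new product. -/
theorem stronger_ties_preserve_adoption {ι : Type*} [Fintype ι] [DecidableEq ι]
    (sN : ι → ℝ) (hsN : ∀ j, sN j ∈ Set.Ioc (0:ℝ) 1)
    (z : ℝ) (hz1 : 1 ≤ z) (hz2 : ∀ j, z * sN j ≤ 1)
    (i : ι) (Hi vL sp : ℝ) (hsp : sp ∈ Set.Ioo (0:ℝ) 1)
    (vH : ι → ℝ) (hvH : ∀ j, vL < vH j) (hHi : Hi < vL)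
    (T : ℕ) (Dc Dn : ℕ → Finset ι)
    (hyp : ∑ t' ∈ Finset.range (T + 1), ∑ j ∈ Dn t', sN j * (vH j - Hi) >
      ∑ t' ∈ Finset.range (T + 1),
        (1 - sp) * ((∑ j ∈ (Dc t').erase i, sN j) + 1) * (vL - Hi)) :
    ∑ t' ∈ Finset.range (T + 1), ∑ j ∈ Dn t', (z * sN j) * (vH j - Hi) >
      ∑ t' ∈ Finset.range (T + 1),
        (1 - sp) * ((∑ j ∈ (Dc t').erase i, z * sN j) + 1) * (vL - Hi) := by
  have hz0 : 0 < z := lt_of_lt_of_le one_pos hz1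
  have hL : ∑ t' ∈ Finset.range (T + 1), ∑ j ∈ Dn t', (z * sN j) * (vH j - Hi)
      = z * ∑ t' ∈ Finset.range (T + 1), ∑ j ∈ Dn t', sN j * (vH j - Hi) := by
    rw [Finset.mul_sum]
    refine Finset.sum_congr rfl fun t _ => ?_
    rw [Finset.mul_sum]
    exact Finset.sum_congr rfl fun j _ => by ring
  have hR : ∑ t' ∈ Finset.range (T + 1),
        (1 - sp) * ((∑ j ∈ (Dc t').erase i, z * sN j) + 1) * (vL - Hi)
      ≤ z * ∑ t' ∈ Finset.range (T + 1),
        (1 - sp) * ((∑ j ∈ (Dc t').erase i, sN j) + 1) * (vL - Hi) := by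
    rw [Finset.mul_sum]
    refine Finset.sum_le_sum fun t _ => ?_
    have hs : (∑ j ∈ (Dc t).erase i, z * sN j) + 1
        ≤ z * ((∑ j ∈ (Dc t).erase i, sN j) + 1) := by
      rw [mul_add, mul_one, Finset.mul_sum]
      gcongr
    have hpos : 0 ≤ (1 - sp) * (vL - Hi) :=
      mul_nonneg (by linarith [hsp.2]) (by linarith)
    calc (1 - sp) * ((∑ j ∈ (Dc t).erase i, z * sN j) + 1) * (vL - Hi)
        ≤ (1 - sp) * (z * ((∑ j ∈ (Dc t).erase i, sN j) + 1)) * (vL - Hi) := by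
          have h1 : 0 ≤ 1 - sp := by linarith [hsp.2]
          have h2 : 0 ≤ vL - Hi := by linarith
          nlinarith [mul_le_mul_of_nonneg_left hs h1]
      _ = z * ((1 - sp) * ((∑ j ∈ (Dc t).erase i, sN j) + 1) * (vL - Hi)) := by ring
  rw [hL]
  exact lt_of_le_of_lt hR (by exact mul_lt_mul_of_pos_left hyp hz0)
end
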